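/- Let d ≥ 1 and p ∈ [1, ∞) be a real number. There exists a constant C, depending only on p and d, such that for all smooth functions a, f : ℝ^d → ℝ that are 2π-periodic in each coordinate, and every positive integer σ, one has | ‖x ↦ a(x) f(σx)‖_{L^p} − (2π)^{−d/p} ‖a‖_{L^p} ‖f‖_{L^p} | ≤ C σ^{−1/p} ‖a‖_{C¹} ‖f‖_{L^p}, where ‖g‖_{L^p} = (∫_{[0,2π]^d} |g(x)|^p dx)^{1/p} and ‖a‖_{C¹} = sup_{x} (|a(x)| + |∇a(x)|). -/

import Mathlib

open scoped BigOperators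
open MeasureTheory Real

/-- `L^p` norm on the fundamental domain `[0, 2π]^d` of the torus. -/
noncomputable def LpBox (d : ℕ) (p : ℝ) (g : (Fin d → ℝ) → ℝ) : ℝ :=
  (∫ x in Set.Icc (0 : Fin d → ℝ) (fun _ => 2 * π), |g x| ^ p) ^ (1 / p)

/-- `C¹` norm `sup_x (|a x| + |∇a x|)` of a function on `ℝ^d`. -/
noncomputable def C1Norm (d : ℕ) (a : (Fin d → ℝ) → ℝ) : ℝ :=
  ⨆ x : Fin d → ℝ, (|a x| + ‖fderiv ℝ a x‖)

/-!
Raising everything to the power `p`, the claim compares `∫ G(x) H(σx)` with `(2π)^{-d} ∫ G ∫ H`,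
where `G = |a|^p` is Lipschitz with constant `p ‖a‖_{C¹}^p` and `H = |f|^p` is `2π`-periodic.
Cut the box into `σ^d` cells of side `2π/σ`: on each cell `H(σ·)` runs through a full period of
`H` while `G` varies by at most `2π Lip(G)/σ`, so replacing `G` by its cell average costs
`O(σ⁻¹) ∫ H`. Taking `p`-th roots with `|X^{1/p} - Y^{1/p}| ≤ |X - Y|^{1/p}` gives `σ^{-1/p}`.
-/

open scoped ENNReal NNReal
open Set

section Rpow

lemma abs_rpow_sub_rpow_le {p M s t : ℝ} (hp : 1 ≤ p) (hs : s ∈ Icc 0 M) (ht : t ∈ Icc 0 M) :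
    |s ^ p - t ^ p| ≤ p * M ^ (p - 1) * |s - t| := by
  have hderiv : ∀ x ∈ Icc 0 M,
      HasDerivWithinAt (fun u : ℝ => u ^ p) (p * x ^ (p - 1)) (Icc 0 M) x :=
    fun x _ => (hasDerivAt_rpow_const (Or.inr hp)).hasDerivWithinAt
  have hbound : ∀ x ∈ Icc 0 M, ‖p * x ^ (p - 1)‖ ≤ p * M ^ (p - 1) := fun x hx => by
    rw [norm_of_nonneg (by have := hx.1; positivity)]
    exact mul_le_mul_of_nonneg_left (rpow_le_rpow hx.1 hx.2 (by linarith)) (by linarith)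
  simpa only [Real.norm_eq_abs] using
    (convex_Icc 0 M).norm_image_sub_le_of_norm_hasDerivWithin_le hderiv hbound ht hs

lemma abs_rpow_sub_rpow_le_abs_sub_rpow {x y q : ℝ} (hx : 0 ≤ x) (hy : 0 ≤ y) (hq0 : 0 ≤ q)
    (hq1 : q ≤ 1) : |x ^ q - y ^ q| ≤ |x - y| ^ q := by
  wlog hyx : y ≤ x generalizing x y
  · rw [abs_sub_comm, abs_sub_comm x]; exact this hy hx (le_of_not_ge hyx)
  have := rpow_add_le_add_rpow hy (sub_nonneg.2 hyx) hq0 hq1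
  rw [add_sub_cancel] at this
  rw [abs_of_nonneg (sub_nonneg.2 (rpow_le_rpow hy hyx hq0)), abs_of_nonneg (sub_nonneg.2 hyx)]
  linarith

lemma abs_rpow_one_div_sub_rpow_one_div_le {p X Y κ M σ F : ℝ} (hp : 1 ≤ p) (hX : 0 ≤ X)
    (hY : 0 ≤ Y) (hκ : 0 ≤ κ) (hM : 0 ≤ M) (hσ : 0 < σ) (hF : 0 ≤ F)
    (h : |X - Y| ≤ κ * M ^ p / σ * F) :
    |X ^ (1 / p) - Y ^ (1 / p)| ≤ κ ^ (1 / p) * σ ^ (-(1 / p)) * M * F ^ (1 / p) := by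
  have hp0 : 0 < p := one_pos.trans_le hp
  calc _ ≤ |X - Y| ^ (1 / p) :=
        abs_rpow_sub_rpow_le_abs_sub_rpow hX hY (by positivity) ((div_le_one hp0).2 hp)
    _ ≤ (κ * M ^ p * σ⁻¹ * F) ^ (1 / p) := by rw [← div_eq_mul_inv]; gcongr
    _ = _ := by
        rw [mul_rpow (by positivity) hF, mul_rpow (by positivity) (by positivity),
          mul_rpow hκ (by positivity), ← rpow_mul hM, mul_one_div_cancel hp0.ne', rpow_one,
          inv_rpow hσ.le, ← rpow_neg hσ.le]
        ring

end Rpow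

section Periods

variable {V α : Type*} [AddGroup V]

def periods (g : V → α) : AddSubgroup V where
  carrier := {v | ∀ x, g (x + v) = g x}
  zero_mem' := by simp
  add_mem' {v w} hv hw x := by rw [← add_assoc, hw, hv]
  neg_mem' {v} hv x := by rw [← hv (x + -v), neg_add_cancel_right]

lemma mem_periods_fderiv {E F : Type*} [NormedAddCommGroup E] [NormedSpace ℝ E]
    [NormedAddCommGroup F] [NormedSpace ℝ F] {g : E → F} {v : E} (hv : v ∈ periods g) :
    v ∈ periods (fderiv ℝ g) := fun x => by
  rw [← fderiv_comp_add_right, show (fun y => g (y + v)) = g from funext hv]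

variable {ι : Type*} [Fintype ι] [DecidableEq ι] {c : ℝ}

lemma mul_intCast_mem_periods {g : (ι → ℝ) → α} (hg : ∀ i, Pi.single i c ∈ periods g)
    (k : ι → ℤ) : (fun i => c * k i) ∈ periods g := by
  have : (fun i => c * k i) = ∑ i, k i • Pi.single i c := by
    ext j; simp [Finset.sum_apply, Pi.single_apply, mul_comm]
  rw [this]
  exact sum_mem fun i _ => zsmul_mem (hg i) _

lemma exists_mem_Icc_eq_of_periods {g : (ι → ℝ) → α} (hc : 0 < c)
    (hg : ∀ i, Pi.single i c ∈ periods g) (x : ι → ℝ) :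
    ∃ y ∈ Icc (0 : ι → ℝ) (fun _ => c), g y = g x := by
  have hy : (fun i => toIcoMod hc 0 (x i))
      = x + fun i => c * ((-toIcoDiv hc 0 (x i) : ℤ) : ℝ) := by
    ext i; simp [toIcoMod, sub_eq_add_neg, mul_comm]
  refine ⟨_, ⟨fun i => (toIcoMod_mem_Ico hc 0 (x i)).1, fun i => ?_⟩, ?_⟩
  · simpa using (toIcoMod_mem_Ico hc 0 (x i)).2.le
  · rw [hy]; exact mul_intCast_mem_periods hg _ x

lemma bddAbove_range_of_periods {g : (ι → ℝ) → ℝ} (hc : 0 < c) (hg : Continuous g)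
    (hper : ∀ i, Pi.single i c ∈ periods g) : BddAbove (range g) := by
  refine ((isCompact_Icc (a := 0) (b := fun _ => c)).image hg).bddAbove.mono ?_
  rintro _ ⟨x, rfl⟩
  exact exists_mem_Icc_eq_of_periods hc hper x

end Periods

section C1Norm

variable {d : ℕ} {a : (Fin d → ℝ) → ℝ} {c : ℝ}

lemma C1Norm_nonneg : 0 ≤ C1Norm d a := Real.iSup_nonneg fun _ => by positivity

lemma abs_add_norm_fderiv_le_C1Norm (ha : ContDiff ℝ 1 a) (hc : 0 < c)
    (hper : ∀ i, Pi.single i c ∈ periods a) (x : Fin d → ℝ) :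
    |a x| + ‖fderiv ℝ a x‖ ≤ C1Norm d a := by
  refine le_ciSup (bddAbove_range_of_periods hc
    (ha.continuous.abs.add (ha.continuous_fderiv one_ne_zero).norm) fun i y => ?_) x
  show |a (y + _)| + ‖fderiv ℝ a (y + _)‖ = _
  rw [hper i y, mem_periods_fderiv (hper i) y]
  rfl

lemma abs_le_C1Norm (ha : ContDiff ℝ 1 a) (hc : 0 < c) (hper : ∀ i, Pi.single i c ∈ periods a)
    (x : Fin d → ℝ) : |a x| ≤ C1Norm d a :=
  (abs_add_norm_fderiv_le_C1Norm ha hc hper x).trans' (le_add_of_nonneg_right (norm_nonneg _))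

lemma norm_fderiv_le_C1Norm (ha : ContDiff ℝ 1 a) (hc : 0 < c)
    (hper : ∀ i, Pi.single i c ∈ periods a) (x : Fin d → ℝ) : ‖fderiv ℝ a x‖ ≤ C1Norm d a :=
  (abs_add_norm_fderiv_le_C1Norm ha hc hper x).trans' (le_add_of_nonneg_left (abs_nonneg _))

lemma lipschitzWith_abs_rpow (ha : ContDiff ℝ 1 a) (hc : 0 < c)
    (hper : ∀ i, Pi.single i c ∈ periods a) {p : ℝ} (hp : 1 ≤ p) :
    LipschitzWith (p * C1Norm d a ^ p).toNNReal (fun x => |a x| ^ p) := by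
  set M := C1Norm d a
  have hM0 : 0 ≤ M := C1Norm_nonneg
  have hM : ∀ x, |a x| ∈ Icc 0 M := fun x => ⟨abs_nonneg _, abs_le_C1Norm ha hc hper x⟩
  have hlip : ∀ u v, |a u - a v| ≤ M * ‖u - v‖ := fun u v =>
    convex_univ.norm_image_sub_le_of_norm_fderiv_le
      (fun _ _ => (ha.differentiable one_ne_zero).differentiableAt)
      (fun x _ => norm_fderiv_le_C1Norm ha hc hper x) (mem_univ v) (mem_univ u)
  refine LipschitzWith.of_dist_le' fun u v => ?_
  rw [Real.dist_eq, dist_eq_norm]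
  calc |(|a u| ^ p - |a v| ^ p)| ≤ p * M ^ (p - 1) * |(|a u| - |a v|)| :=
        abs_rpow_sub_rpow_le hp (hM u) (hM v)
    _ ≤ p * M ^ (p - 1) * (M * ‖u - v‖) := by
        gcongr
        exact (abs_abs_sub_abs_le_abs_sub _ _).trans (hlip u v)
    _ = p * M ^ p * ‖u - v‖ := by
        rw [← mul_assoc, mul_assoc p, ← rpow_add_one' hM0 (by linarith)]
        ring_nf

end C1Norm

section Unfolding

open scoped Pointwise

variable {d : ℕ} {c : ℝ}

lemma iUnion_fin_Ioc_mul (hc : 0 ≤ c) (σ : ℕ) :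
    ⋃ m : Fin σ, Ioc (c * m) (c * (m + 1)) = Ioc 0 (c * σ) := by
  have hmono : Monotone fun n : ℕ => c * n := Nat.mono_cast.const_mul hc
  have := hmono.biUnion_Ico_Ioc_map_succ 0 σ
  simp only [Order.succ_eq_add_one, Nat.cast_add, Nat.cast_one,
    Nat.cast_zero, mul_zero] at this
  rw [← this]
  ext x
  simp [Fin.exists_iff]

lemma pairwise_disjoint_fin_Ioc_mul (hc : 0 ≤ c) (σ : ℕ) :
    Pairwise (Function.onFun Disjoint fun m : Fin σ => Ioc (c * m) (c * (m + 1))) := by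
  have hmono : Monotone fun n : ℕ => c * n := Nat.mono_cast.const_mul hc
  have := hmono.pairwise_disjoint_on_Ioc_succ.comp_of_injective (Fin.val_injective (n := σ))
  simpa [Function.onFun] using this

lemma setIntegral_Icc_mul_eq_sum_translate (hc : 0 ≤ c) (σ : ℕ) {ψ : (Fin d → ℝ) → ℝ}
    (hψ : IntegrableOn ψ (Icc 0 fun _ => c * σ)) :
    ∫ x in Icc 0 (fun _ => c * σ), ψ x
      = ∑ k : Fin d → Fin σ, ∫ y in Icc 0 (fun _ => c), ψ (y + fun i => c * k i) := by
  -- the half-open cells tile the box exactly; the closed box differs from it by a null set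
  have hae : ∀ b : ℝ, (univ.pi fun _ : Fin d => Ioc 0 b) =ᵐ[volume] Icc 0 fun _ => b := fun b => by
    rw [volume_pi]; exact Measure.univ_pi_Ioc_ae_eq_Icc
  have hcells : (univ.pi fun _ : Fin d => Ioc 0 (c * σ))
      = ⋃ k : Fin d → Fin σ, univ.pi fun i => Ioc (c * k i) (c * (k i + 1)) := by
    rw [iUnion_univ_pi fun (_ : Fin d) (m : Fin σ) => Ioc (c * m) (c * (m + 1))]
    simp only [iUnion_fin_Ioc_mul hc]
  have hdisj : Pairwise (Function.onFun Disjoint fun k : Fin d → Fin σ =>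
      univ.pi fun i => Ioc (c * k i) (c * (k i + 1))) := fun k l hkl => by
    obtain ⟨i, hi⟩ := Function.ne_iff.1 hkl
    exact disjoint_univ_pi.2 ⟨i, pairwise_disjoint_fin_Ioc_mul hc σ hi⟩
  rw [← setIntegral_congr_set (hae _), hcells, integral_iUnion
    (fun k => .univ_pi fun i => measurableSet_Ioc) hdisj (hcells ▸ hψ.congr_set_ae (hae _)),
    tsum_fintype]
  refine Finset.sum_congr rfl fun k _ => ?_
  set v : Fin d → ℝ := fun i => c * k i
  have hpre : (· + v) ⁻¹' (univ.pi fun i => Ioc (c * k i) (c * (k i + 1)))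
      = univ.pi fun _ => Ioc 0 c := by
    ext x; simp [v, mul_add, add_comm]
  rw [← setIntegral_congr_set (hae c), ← hpre]
  exact ((measurePreserving_add_right volume v).setIntegral_preimage_emb
    (measurableEmbedding_addRight v) ψ _).symm

lemma smul_Icc_const {σ : ℝ} (hσ : 0 < σ) (c : ℝ) :
    σ • Icc (0 : Fin d → ℝ) (fun _ => c) = Icc 0 fun _ => c * σ := by
  rw [← pi_univ_Icc, smul_univ_pi, ← pi_univ_Icc]
  congr 1; funext i
  simp [LinearOrderedField.smul_Icc hσ, mul_comm]

lemma setIntegral_comp_smul_Icc_eq_sum_translate (hc : 0 ≤ c) {σ : ℕ} (hσ : 0 < σ)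
    {ψ : (Fin d → ℝ) → ℝ} (hψ : IntegrableOn ψ (Icc 0 fun _ => c * σ)) :
    ∫ x in Icc 0 (fun _ => c), ψ ((σ : ℝ) • x)
      = ((σ : ℝ) ^ d)⁻¹ *
          ∑ k : Fin d → Fin σ, ∫ y in Icc 0 (fun _ => c), ψ (y + fun i => c * k i) := by
  rw [Measure.setIntegral_comp_smul_of_pos _ _ _ (Nat.cast_pos.2 hσ),
    smul_Icc_const (Nat.cast_pos.2 hσ), setIntegral_Icc_mul_eq_sum_translate hc σ hψ,
    Module.finrank_fin_fun, smul_eq_mul]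

end Unfolding

lemma abs_setIntegral_mul_sub_setAverage_mul_le {α : Type*} [MeasurableSpace α] {μ : Measure α}
    {s : Set α} (hs : MeasurableSet s) (hμ0 : μ s ≠ 0) (hμ : μ s ≠ ∞) {φ H : α → ℝ} {ε : ℝ}
    (hφ : IntegrableOn φ s μ) (hH : IntegrableOn H s μ)
    (hφH : IntegrableOn (fun x => φ x * H x) s μ) (hH0 : ∀ x ∈ s, 0 ≤ H x)
    (hosc : ∀ x ∈ s, ∀ y ∈ s, |φ x - φ y| ≤ ε) :
    |∫ x in s, φ x * H x ∂μ - (⨍ x in s, φ x ∂μ) * ∫ x in s, H x ∂μ|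
      ≤ ε * ∫ x in s, H x ∂μ := by
  set m := ⨍ x in s, φ x ∂μ
  have hclose : ∀ x ∈ s, |φ x - m| ≤ ε := fun x hx => by
    have := (convex_closedBall (φ x) ε).set_average_mem Metric.isClosed_closedBall hμ0 hμ
      ((ae_restrict_mem hs).mono fun y hy => ?_) hφ
    · rwa [Metric.mem_closedBall, Real.dist_eq, abs_sub_comm] at this
    · rw [Metric.mem_closedBall, Real.dist_eq]; exact hosc y hy x hx
  calc |∫ x in s, φ x * H x ∂μ - m * ∫ x in s, H x ∂μ|
      = ‖∫ x in s, (φ x - m) * H x ∂μ‖ := by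
        rw [← integral_const_mul, ← integral_sub hφH (hH.const_mul m), Real.norm_eq_abs]
        simp_rw [sub_mul]
    _ ≤ ∫ x in s, ε * H x ∂μ := norm_integral_le_of_norm_le (hH.const_mul ε)
        ((ae_restrict_mem hs).mono fun x hx => by
          rw [norm_mul, Real.norm_of_nonneg (hH0 x hx), Real.norm_eq_abs]
          exact mul_le_mul_of_nonneg_right (hclose x hx) (hH0 x hx))
    _ = ε * ∫ x in s, H x ∂μ := integral_const_mul ε _

section Decorrelation

variable {d : ℕ} {c : ℝ} {σ : ℕ}

lemma setIntegral_mul_comp_smul_eq_sum (hc : 0 ≤ c) (hσ : 0 < σ) {G H : (Fin d → ℝ) → ℝ}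
    (hG : Continuous G) (hH : Continuous H) (hper : ∀ i, Pi.single i c ∈ periods H) :
    ∫ x in Icc 0 (fun _ => c), G x * H ((σ : ℝ) • x)
      = ((σ : ℝ) ^ d)⁻¹ * ∑ k : Fin d → Fin σ,
          ∫ y in Icc 0 (fun _ => c), G ((σ : ℝ)⁻¹ • (y + fun i => c * k i)) * H y := by
  have hσ' : (σ : ℝ) ≠ 0 := Nat.cast_ne_zero.2 hσ.ne'
  have key := setIntegral_comp_smul_Icc_eq_sum_translate hc hσ
    (ψ := fun y => G ((σ : ℝ)⁻¹ • y) * H y)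
    (((hG.comp (continuous_const_smul _)).mul hH).continuousOn.integrableOn_compact isCompact_Icc)
  simp only [inv_smul_smul₀ hσ'] at key
  rw [key]
  congr 2; funext k; congr 1; funext y
  have := mul_intCast_mem_periods hper (fun i => ((k i : ℕ) : ℤ)) y
  push_cast at this
  rw [this]

lemma volume_real_Icc_const (hc : 0 ≤ c) :
    volume.real (Icc (0 : Fin d → ℝ) fun _ => c) = c ^ d := by
  rw [measureReal_def,
    Real.volume_Icc_pi_toReal (show (0 : Fin d → ℝ) ≤ fun _ => c from fun _ => hc)]
  simp

lemma abs_sub_le_of_lipschitzWith_of_mem_Icc (hc : 0 ≤ c) {G : (Fin d → ℝ) → ℝ} {K : ℝ≥0}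
    (hG : LipschitzWith K G) (v : Fin d → ℝ) {y z : Fin d → ℝ}
    (hy : y ∈ Icc 0 fun _ => c) (hz : z ∈ Icc 0 fun _ => c) :
    |G ((σ : ℝ)⁻¹ • (y + v)) - G ((σ : ℝ)⁻¹ • (z + v))| ≤ c * K / σ := by
  have hyz : dist y z ≤ c := (dist_pi_le_iff hc).2 fun i =>
    (Real.dist_le_of_mem_Icc ⟨hy.1 i, hy.2 i⟩ ⟨hz.1 i, hz.2 i⟩).trans_eq (sub_zero c)
  rw [← Real.dist_eq]
  refine (hG.dist_le_mul _ _).trans ?_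
  rw [dist_smul₀, dist_add_right, norm_inv, Real.norm_natCast, inv_mul_eq_div, mul_div_assoc',
    mul_comm c]
  gcongr

lemma abs_setIntegral_mul_comp_smul_sub_le (hc : 0 < c) (hσ : 0 < σ) {G H : (Fin d → ℝ) → ℝ}
    {K : ℝ≥0} (hG : LipschitzWith K G) (hH : Continuous H) (hH0 : ∀ x, 0 ≤ H x)
    (hper : ∀ i, Pi.single i c ∈ periods H) :
    |(∫ x in Icc 0 (fun _ => c), G x * H ((σ : ℝ) • x))
        - (c ^ d)⁻¹ * (∫ x in Icc 0 (fun _ => c), G x) * ∫ x in Icc 0 (fun _ => c), H x|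
      ≤ c * K / σ * ∫ x in Icc 0 (fun _ => c), H x := by
  set B : Set (Fin d → ℝ) := Icc 0 fun _ => c
  set F := ∫ x in B, H x
  set Gk : (Fin d → Fin σ) → (Fin d → ℝ) → ℝ := fun k y => G ((σ : ℝ)⁻¹ • (y + fun i => c * k i))
  have hGk : ∀ k, Continuous (Gk k) := fun k => hG.continuous.comp (by fun_prop)
  have hvol : volume B ≠ 0 := by simp [B, Real.volume_Icc_pi, hc]
  have havg : ∀ k, (c ^ d)⁻¹ * ∫ y in B, Gk k y = ⨍ y in B, Gk k y := fun k => by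
    rw [setAverage_eq, volume_real_Icc_const hc.le, smul_eq_mul]
  have hcell : ∀ k, |(∫ y in B, Gk k y * H y) - (⨍ y in B, Gk k y) * F| ≤ c * K / σ * F :=
    fun k => abs_setIntegral_mul_sub_setAverage_mul_le measurableSet_Icc hvol measure_Icc_lt_top.ne
      ((hGk k).continuousOn.integrableOn_compact isCompact_Icc)
      (hH.continuousOn.integrableOn_compact isCompact_Icc)
      (((hGk k).mul hH).continuousOn.integrableOn_compact isCompact_Icc)
      (fun x _ => hH0 x) fun y hy z hz => abs_sub_le_of_lipschitzWith_of_mem_Icc hc.le hG _ hy hz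
  have hsplit : (∫ x in B, G x * H ((σ : ℝ) • x)) - (c ^ d)⁻¹ * (∫ x in B, G x) * F
      = ((σ : ℝ) ^ d)⁻¹ * ∑ k, ((∫ y in B, Gk k y * H y) - (⨍ y in B, Gk k y) * F) := by
    have hA := setIntegral_mul_comp_smul_eq_sum hc.le hσ hG.continuous continuous_const
      (H := fun _ => (1 : ℝ)) fun _ _ => rfl
    simp only [mul_one] at hA
    rw [setIntegral_mul_comp_smul_eq_sum hc.le hσ hG.continuous hH hper, hA]
    simp only [← havg, Finset.sum_sub_distrib, ← Finset.sum_mul, ← Finset.mul_sum]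
    ring
  rw [hsplit, abs_mul, abs_of_pos (by positivity)]
  calc _ ≤ ((σ : ℝ) ^ d)⁻¹ * ∑ _k : Fin d → Fin σ, c * K / σ * F := by
        gcongr
        exact (Finset.abs_sum_le_sum_abs _ _).trans (Finset.sum_le_sum fun k _ => hcell k)
    _ = c * K / σ * F := by
        rw [Finset.sum_const, Finset.card_univ, Fintype.card_fun, Fintype.card_fin,
          Fintype.card_fin, nsmul_eq_mul]
        push_cast
        field_simp

end Decorrelation

section LpBox

variable {d : ℕ} {p : ℝ}

lemma LpBox_mul (a g : (Fin d → ℝ) → ℝ) :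
    LpBox d p (fun x => a x * g x)
      = (∫ x in Icc 0 (fun _ => 2 * π), |a x| ^ p * |g x| ^ p) ^ (1 / p) := by
  simp only [LpBox, abs_mul, mul_rpow (abs_nonneg _) (abs_nonneg _)]

lemma two_pi_rpow_mul_LpBox_mul_LpBox (a f : (Fin d → ℝ) → ℝ) :
    (2 * π) ^ (-(d : ℝ) / p) * LpBox d p a * LpBox d p f
      = (((2 * π) ^ d)⁻¹ * (∫ x in Icc 0 (fun _ => 2 * π), |a x| ^ p)
          * ∫ x in Icc 0 (fun _ => 2 * π), |f x| ^ p) ^ (1 / p) := by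
  have h2π : (((2 * π) ^ d)⁻¹ : ℝ) ^ (1 / p) = (2 * π) ^ (-(d : ℝ) / p) := by
    rw [← rpow_natCast, ← rpow_neg two_pi_pos.le, ← rpow_mul two_pi_pos.le, neg_div, neg_mul,
      mul_one_div]
  have hA : 0 ≤ ∫ x in Icc (0 : Fin d → ℝ) (fun _ => 2 * π), |a x| ^ p := by positivity
  have hF : 0 ≤ ∫ x in Icc (0 : Fin d → ℝ) (fun _ => 2 * π), |f x| ^ p := by positivity
  rw [mul_rpow (by positivity) hF, mul_rpow (by positivity) hA, h2π]
  rfl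

end LpBox

theorem improved_holder_general (d : ℕ) (p : ℝ) (hp : 1 ≤ p) :
    ∃ C : ℝ, ∀ a f : (Fin d → ℝ) → ℝ,
      ContDiff ℝ (⊤ : ℕ∞) a → ContDiff ℝ (⊤ : ℕ∞) f →
      (∀ x i, a (x + Pi.single i (2 * π)) = a x) →
      (∀ x i, f (x + Pi.single i (2 * π)) = f x) →
      ∀ σ : ℕ, 0 < σ →
        |LpBox d p (fun x => a x * f ((σ : ℝ) • x))
            - (2 * π) ^ (-(d : ℝ) / p) * LpBox d p a * LpBox d p f|
          ≤ C * (σ : ℝ) ^ (-(1 / p)) * C1Norm d a * LpBox d p f := by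
  refine ⟨(2 * π * p) ^ (1 / p), fun a f ha hf haper hfper σ hσ => ?_⟩
  have hp0 : 0 < p := one_pos.trans_le hp
  have hdec := abs_setIntegral_mul_comp_smul_sub_le two_pi_pos hσ
    (lipschitzWith_abs_rpow (ha.of_le (by exact_mod_cast le_top)) two_pi_pos
      (fun i x => haper x i) hp)
    (hf.continuous.abs.rpow_const fun _ => Or.inr hp0.le) (fun _ => by positivity)
    (fun i x => by simp only [hfper x i])
  rw [Real.coe_toNNReal _ (by have := C1Norm_nonneg (a := a); positivity), ← mul_assoc] at hdec
  rw [LpBox_mul, two_pi_rpow_mul_LpBox_mul_LpBox]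
  exact abs_rpow_one_div_sub_rpow_one_div_le hp (by positivity) (by positivity) (by positivity)
    C1Norm_nonneg (Nat.cast_pos.2 hσ) (by positivity) hdec

/-- Improved Hölder inequality on the torus `T^d`: for smooth `2π`-periodic `a, f` and
`σ ∈ ℕ⁺`, `| ‖a f(σ·)‖_{L^p} − (2π)^{−d/p} ‖a‖_{L^p} ‖f‖_{L^p} | ≤ C σ^{−1/p} ‖a‖_{C¹} ‖f‖_{L^p}`,
with `C = C(p, d)`. -/
theorem improved_holder (d : ℕ) (hd : 1 ≤ d) (p : ℝ) (hp : 1 ≤ p) :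
    ∃ C : ℝ, ∀ a f : (Fin d → ℝ) → ℝ,
      ContDiff ℝ (⊤ : ℕ∞) a → ContDiff ℝ (⊤ : ℕ∞) f →
      (∀ x i, a (x + Pi.single i (2 * π)) = a x) →
      (∀ x i, f (x + Pi.single i (2 * π)) = f x) →
      ∀ σ : ℕ, 0 < σ →
        |LpBox d p (fun x => a x * f ((σ : ℝ) • x))
            - (2 * π) ^ (-(d : ℝ) / p) * LpBox d p a * LpBox d p f|
          ≤ C * (σ : ℝ) ^ (-(1 / p)) * C1Norm d a * LpBox d p f :=
  improved_holder_general d p hp
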